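/- arXiv:1105.2307 — 4 statements merged into one kernel-verified Lean document; each statement's English description precedes it below -/
import Mathlib

section
/- Suppose there exist constants A, m > 0 such that for every sufficiently small ε > 0 the space X admits a covering by at most A·ε^{-m} balls of radius ε for the base distance dist_X. Suppose moreover that dist_t ≤ e^{ct+d}·dist_X + φ(t) for some constants c, d ≥ 0 and a function φ with φ(t) → 0 as t → ∞. Then the entropy h_D of X is at most m·c. -/
open Set Filter ENNReal

/-- The ball of center `c` and radius `ε` for a distance function `d`. -/
def dBall {X : Type*} (d : X → X → ℝ) (c : X) (ε : ℝ) : Set X := {y | d c y ≤ ε}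

/-- `N(Y,ε)`: minimal number of `ε`-balls (for `d`) needed to cover `Y`. -/
noncomputable def coverNum {X : Type*} (d : X → X → ℝ) (Y : Set X) (ε : ℝ) : ℕ∞ :=
  ⨅ (F : Finset X) (_ : Y ⊆ ⋃ c ∈ F, dBall d c ε), (F.card : ℕ∞)

/-- `M(Y,ε)`: maximal cardinality of an `ε`-separated subset of `Y`. -/
noncomputable def sepNum {X : Type*} (d : X → X → ℝ) (Y : Set X) (ε : ℝ) : ℕ∞ :=
  ⨆ (F : Finset X) (_ : ↑F ⊆ Y ∧ (F : Set X).Pairwise fun x y => ε < d x y),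
    (F.card : ℕ∞)

/-- The entropy `h_D(Y) = sup_{ε>0} limsup_{t→∞} (1/t) log N(Y,t,ε)` associated to
a family of distances `D = {dist_t}`. -/
noncomputable def entropy {X : Type*} (d : ℝ → X → X → ℝ) (Y : Set X) : EReal :=
  ⨆ (ε : ℝ) (_ : 0 < ε),
    atTop.limsup fun t : ℝ =>
      ((t⁻¹ : ℝ) : EReal) * ENNReal.log ((coverNum (d t) Y ε : ℕ∞) : ℝ≥0∞)


/-- if `X` can be covered by at most `A ε^{-m}` balls of radius `ε`
(for the base distance `dX`) for every small enough `ε > 0`, and if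
`dist_t ≤ e^{ct+d₀} dist_X + φ(t)` with `φ(t) → 0` as `t → ∞`, then the entropy of
the family `{dist_t}` on `X` is at most `m c`. -/
theorem entropy_le_of_polynomial_cover {X : Type*} (d : ℝ → X → X → ℝ)
    (dX : X → X → ℝ) (A m c d₀ : ℝ) (hA : 0 < A) (hm : 0 < m) (hc : 0 ≤ c)
    (hd₀ : 0 ≤ d₀) (φ : ℝ → ℝ) (hφ : Tendsto φ atTop (nhds 0))
    (ε₀ : ℝ) (hε₀ : 0 < ε₀)
    (hcov : ∀ ε : ℝ, 0 < ε → ε < ε₀ →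
      ((coverNum dX univ ε : ℕ∞) : ℝ≥0∞) ≤ ENNReal.ofReal (A * ε ^ (-m)))
    (hcomp : ∀ t x y, 0 ≤ t → d t x y ≤ Real.exp (c * t + d₀) * dX x y + φ t) :
    entropy d univ ≤ ((m * c : ℝ) : EReal) := by
  rw [entropy]
  refine iSup₂_le fun ε hε => ?_
  set B := min (ε / 2) (ε₀ / 2) with hB
  have hB0 : 0 < B := lt_min (by linarith) (by linarith)
  set K := A * B ^ (-m) with hK
  have hK0 : 0 < K := mul_pos hA (Real.rpow_pos_of_pos hB0 _)
  -- the eventual pointwise bound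
  have hev : ∀ᶠ t : ℝ in atTop,
      ((t⁻¹ : ℝ) : EReal) * ENNReal.log ((coverNum (d t) univ ε : ℕ∞) : ℝ≥0∞)
        ≤ ((t⁻¹ * (Real.log K + m * (c * t + d₀)) : ℝ) : EReal) := by
    have hφ' : ∀ᶠ t : ℝ in atTop, φ t < ε / 2 :=
      hφ.eventually (eventually_lt_nhds (by linarith))
    filter_upwards [hφ', eventually_ge_atTop (1 : ℝ)] with t hφt ht1
    have ht0 : (0 : ℝ) < t := lt_of_lt_of_le one_pos ht1
    set δ := B * Real.exp (-(c * t + d₀)) with hδ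
    have hδ0 : 0 < δ := mul_pos hB0 (Real.exp_pos _)
    have hctd : 0 ≤ c * t + d₀ := add_nonneg (mul_nonneg hc ht0.le) hd₀
    have hδB : δ ≤ B := by
      have : Real.exp (-(c * t + d₀)) ≤ 1 := Real.exp_le_one_iff.2 (by linarith)
      calc δ = B * Real.exp (-(c * t + d₀)) := rfl
        _ ≤ B * 1 := by gcongr
        _ = B := mul_one B
    have hδε₀ : δ < ε₀ := lt_of_le_of_lt hδB (lt_of_le_of_lt (min_le_right _ _) (by linarith))
    have hBδ : Real.exp (c * t + d₀) * δ = B := by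
      rw [hδ, ← mul_assoc, mul_comm (Real.exp _) B, mul_assoc, ← Real.exp_add]
      rw [show c * t + d₀ + -(c * t + d₀) = 0 from by ring, Real.exp_zero, mul_one]
    -- step 1: covering comparison
    have hN : coverNum (d t) univ ε ≤ coverNum dX univ δ := by
      refine le_iInf₂ fun F hF => ?_
      refine iInf₂_le F ?_
      intro y hy
      rcases mem_iUnion₂.1 (hF hy) with ⟨p, hpF, hp⟩
      refine mem_iUnion₂.2 ⟨p, hpF, ?_⟩
      have hp' : dX p y ≤ δ := hp
      have h1 : d t p y ≤ Real.exp (c * t + d₀) * dX p y + φ t := hcomp t p y ht0.le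
      have h2 : Real.exp (c * t + d₀) * dX p y ≤ Real.exp (c * t + d₀) * δ := by
        gcongr
      show d t p y ≤ ε
      calc d t p y ≤ Real.exp (c * t + d₀) * δ + φ t := by linarith
        _ = B + φ t := by rw [hBδ]
        _ ≤ ε / 2 + ε / 2 := add_le_add (min_le_left _ _) hφt.le
        _ = ε := by ring
    -- step 2: the polynomial bound
    have hδm : δ ^ (-m) = B ^ (-m) * Real.exp (m * (c * t + d₀)) := by
      rw [Real.rpow_def_of_pos hδ0, Real.rpow_def_of_pos hB0, hδ,
        Real.log_mul hB0.ne' (Real.exp_pos _).ne', Real.log_exp, ← Real.exp_add]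
      congr 1
      ring
    have hle : ((coverNum (d t) univ ε : ℕ∞) : ℝ≥0∞)
        ≤ ENNReal.ofReal (K * Real.exp (m * (c * t + d₀))) := by
      refine le_trans ?_ (le_trans (hcov δ hδ0 hδε₀) ?_)
      · exact_mod_cast hN
      · refine le_of_eq ?_
        congr 1
        rw [hδm, hK]
        ring
    have h2 : ENNReal.log ((coverNum (d t) univ ε : ℕ∞) : ℝ≥0∞)
        ≤ ((Real.log K + m * (c * t + d₀) : ℝ) : EReal) := by
      calc ENNReal.log ((coverNum (d t) univ ε : ℕ∞) : ℝ≥0∞)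
          ≤ ENNReal.log (ENNReal.ofReal (K * Real.exp (m * (c * t + d₀)))) :=
            ENNReal.log_monotone hle
        _ = ((Real.log K + m * (c * t + d₀) : ℝ) : EReal) := by
            rw [ENNReal.log_ofReal_of_pos (by positivity),
              Real.log_mul hK0.ne' (Real.exp_pos _).ne', Real.log_exp]
    calc ((t⁻¹ : ℝ) : EReal) * ENNReal.log ((coverNum (d t) univ ε : ℕ∞) : ℝ≥0∞)
        ≤ ((t⁻¹ : ℝ) : EReal) * ((Real.log K + m * (c * t + d₀) : ℝ) : EReal) :=
          mul_le_mul_of_nonneg_left h2 (by exact_mod_cast inv_nonneg.2 ht0.le)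
      _ = ((t⁻¹ * (Real.log K + m * (c * t + d₀)) : ℝ) : EReal) := (EReal.coe_mul _ _).symm
  -- the real-valued majorant tends to m*c
  have htend : Tendsto (fun t : ℝ => t⁻¹ * (Real.log K + m * (c * t + d₀))) atTop
      (nhds (m * c)) := by
    have h1 : Tendsto (fun t : ℝ => (Real.log K + m * d₀) * t⁻¹ + m * c) atTop
        (nhds ((Real.log K + m * d₀) * 0 + m * c)) :=
      (tendsto_inv_atTop_zero.const_mul _).add_const _
    rw [mul_zero, zero_add] at h1
    refine h1.congr' ?_
    filter_upwards [eventually_ne_atTop (0 : ℝ)] with t ht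
    field_simp
    ring
  calc (atTop.limsup fun t : ℝ =>
        ((t⁻¹ : ℝ) : EReal) * ENNReal.log ((coverNum (d t) univ ε : ℕ∞) : ℝ≥0∞))
      ≤ atTop.limsup fun t : ℝ =>
          ((t⁻¹ * (Real.log K + m * (c * t + d₀)) : ℝ) : EReal) :=
        limsup_le_limsup hev
    _ = ((m * c : ℝ) : EReal) := Tendsto.limsup_eq (EReal.tendsto_coe.2 htend)
end

section
/- Let 0 < ε < 1 be fixed. There exists a constant A ≥ 1 such that for all points a, b in the unit disc D: if dist_P(a,b) ≤ A^{−1}e^{−R}, then there exist automorphisms τ_a, τ_b of D with τ_a(0) = a, τ_b(0) = b, and dist_P(τ_a(ξ), τ_b(ξ)) ≤ ε for every ξ ∈ D_R. -/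
open Set Complex

noncomputable section

/-- The inverse hyperbolic tangent `tanh⁻¹ x = ½ log((1+x)/(1-x))`. -/
def arTanh (x : ℝ) : ℝ := Real.log ((1 + x) / (1 - x)) / 2

/-- The Poincaré distance on the unit disc:
`dist_P(w₁,w₂) = tanh⁻¹ (|w₁ - w₂| / |1 - w̄₁ w₂|)`. -/
def distP (w₁ w₂ : ℂ) : ℝ :=
  arTanh (‖w₁ - w₂‖ / ‖1 - (starRingEnd ℂ) w₁ * w₂‖)

/-- `D_R`, the disc of center `0` and of hyperbolic radius `R`, i.e. `D_R = r·D`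
with `R = log((1+r)/(1-r))`, that is, `r = tanh (R/2)`. -/
def hyperDisc (R : ℝ) : Set ℂ := {z : ℂ | ‖z‖ < Real.tanh (R / 2)}

end

/-- An automorphism of the unit disc: a rotated Möbius transformation
`z ↦ e^{iθ} (z - w)/(1 - w̄ z)` with `|w| < 1`. -/
def IsDiscAut (f : ℂ → ℂ) : Prop :=
  ∃ (θ : ℝ) (w : ℂ), ‖w‖ < 1 ∧
    ∀ z : ℂ, f z = Complex.exp (θ * Complex.I) * (z - w) / (1 - (starRingEnd ℂ) w * z)

/-!
Take `τ_a z = (z + a)/(1 + ā z)`. Clearing denominators, the numerator of `τ_a ξ - τ_b ξ` is at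
most `4|a - b|`, while that of `1 - conj (τ_a ξ) τ_b ξ` is at least
`|1 - ā b|(1 - |ξ|²) - 2|a - b|`. On `D_R` one has `1 - |ξ|² ≥ e^{-R}`. With `A = 16 / tanh ε`,
the hypothesis and `ρ ≤ 2 tanh⁻¹ ρ` give `|a - b| ≤ c e^{-R} |1 - ā b|` for `c = tanh ε / 8`, so
the pseudo-hyperbolic distance of `τ_a ξ` and `τ_b ξ` is at most `4c/(1 - 2c) ≤ tanh ε`.
-/

open ComplexConjugate

theorem Real.tanh_pos {x : ℝ} (hx : 0 < x) : 0 < Real.tanh x := by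
  rw [Real.tanh_eq_sinh_div_cosh]
  exact div_pos (Real.sinh_pos_iff.2 hx) (Real.cosh_pos x)

lemma arTanh_eq_artanh {x : ℝ} (hx : x ∈ Icc (-1) 1) : arTanh x = Real.artanh x := by
  rw [arTanh, Real.artanh_eq_half_log hx]
  ring

lemma half_le_arTanh {x : ℝ} (h0 : 0 ≤ x) (h1 : x < 1) : x / 2 ≤ arTanh x := by
  have hlog_sub : Real.log (1 - x) ≤ -x := by
    linarith [Real.log_le_sub_one_of_pos (show 0 < 1 - x by linarith)]
  have hlog_add : 0 ≤ Real.log (1 + x) := Real.log_nonneg (by linarith)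
  rw [arTanh, Real.log_div (by linarith) (by linarith)]
  linarith

lemma arTanh_le_of_le_tanh {x y : ℝ} (hx : -1 < x) (h : x ≤ Real.tanh y) : arTanh x ≤ y := by
  have hy := Real.tanh_lt_one y
  rw [arTanh_eq_artanh ⟨hx.le, by linarith⟩, ← Real.artanh_tanh y]
  exact Real.artanh_le_artanh hx hy h

lemma exp_neg_le_one_sub_tanh_half_sq {R : ℝ} (hR : 0 ≤ R) :
    Real.exp (-R) ≤ 1 - Real.tanh (R / 2) ^ 2 := by
  have hcosh : Real.cosh (R / 2) ≤ Real.exp (R / 2) := by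
    rw [Real.cosh_eq]
    linarith [Real.exp_le_exp.2 (show -(R / 2) ≤ R / 2 by linarith)]
  have hsech : 1 - Real.tanh (R / 2) ^ 2 = (Real.cosh (R / 2) ^ 2)⁻¹ := by
    have hc := (Real.cosh_pos (R / 2)).ne'
    rw [Real.tanh_eq_sinh_div_cosh, div_pow]
    field_simp
    linarith [Real.cosh_sq_sub_sinh_sq (R / 2)]
  calc Real.exp (-R) = (Real.exp (R / 2) ^ 2)⁻¹ := by
        rw [sq, ← Real.exp_add, add_halves, Real.exp_neg]
    _ ≤ (Real.cosh (R / 2) ^ 2)⁻¹ := by gcongr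
    _ = 1 - Real.tanh (R / 2) ^ 2 := hsech.symm

lemma exp_neg_le_one_sub_norm_sq_of_mem_hyperDisc {R : ℝ} {ξ : ℂ} (hR : 0 ≤ R)
    (hξ : ξ ∈ hyperDisc R) : Real.exp (-R) ≤ 1 - ‖ξ‖ ^ 2 := by
  have hsq : ‖ξ‖ ^ 2 ≤ Real.tanh (R / 2) ^ 2 := pow_le_pow_left₀ (norm_nonneg ξ) hξ.le 2
  linarith [exp_neg_le_one_sub_tanh_half_sq hR]

/-- The pseudo-hyperbolic distance. -/
noncomputable def pseudoDist (u v : ℂ) : ℝ := ‖u - v‖ / ‖1 - conj u * v‖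

lemma distP_eq_arTanh_pseudoDist (u v : ℂ) : distP u v = arTanh (pseudoDist u v) := rfl

lemma pseudoDist_nonneg (u v : ℂ) : 0 ≤ pseudoDist u v := by
  unfold pseudoDist
  positivity

lemma normSq_one_sub_conj_mul_sub_normSq_sub (a b : ℂ) :
    normSq (1 - conj a * b) - normSq (a - b) = (1 - normSq a) * (1 - normSq b) := by
  simp only [normSq_apply, sub_re, sub_im, mul_re, mul_im, one_re, one_im, conj_re, conj_im]
  ring

section UnitDisc

variable {a b ξ : ℂ}

lemma norm_sub_lt_norm_one_sub_conj_mul (ha : ‖a‖ < 1) (hb : ‖b‖ < 1) :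
    ‖a - b‖ < ‖1 - conj a * b‖ := by
  have ha' : 0 < 1 - normSq a := by rw [normSq_eq_norm_sq]; nlinarith [norm_nonneg a]
  have hb' : 0 < 1 - normSq b := by rw [normSq_eq_norm_sq]; nlinarith [norm_nonneg b]
  have hid := normSq_one_sub_conj_mul_sub_normSq_sub a b
  rw [← sq_lt_sq₀ (norm_nonneg _) (norm_nonneg _), ← normSq_eq_norm_sq, ← normSq_eq_norm_sq]
  nlinarith [mul_pos ha' hb']

lemma norm_one_sub_conj_mul_pos (ha : ‖a‖ < 1) (hb : ‖b‖ < 1) : 0 < ‖1 - conj a * b‖ :=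
  (norm_nonneg _).trans_lt (norm_sub_lt_norm_one_sub_conj_mul ha hb)

lemma pseudoDist_lt_one (ha : ‖a‖ < 1) (hb : ‖b‖ < 1) : pseudoDist a b < 1 :=
  (div_lt_one (norm_one_sub_conj_mul_pos ha hb)).2 (norm_sub_lt_norm_one_sub_conj_mul ha hb)

lemma one_add_conj_mul_ne_zero (ha : ‖a‖ < 1) (hξ : ‖ξ‖ < 1) : 1 + conj a * ξ ≠ 0 := by
  have h := norm_one_sub_conj_mul_pos ha (show ‖-ξ‖ < 1 by rwa [norm_neg])
  rw [mul_neg, sub_neg_eq_add] at h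
  exact norm_pos_iff.1 h

noncomputable def mobius (a z : ℂ) : ℂ := (z + a) / (1 + conj a * z)

lemma isDiscAut_mobius (ha : ‖a‖ < 1) : IsDiscAut (mobius a) :=
  ⟨0, -a, by rwa [norm_neg], fun z => by simp [mobius]⟩

lemma mobius_zero (a : ℂ) : mobius a 0 = a := by simp [mobius]

lemma norm_mobius_sub_mobius_mul_le (ha : ‖a‖ < 1) (hb : ‖b‖ < 1) (hξ : ‖ξ‖ < 1) :
    ‖mobius a ξ - mobius b ξ‖ * (‖1 + conj a * ξ‖ * ‖1 + conj b * ξ‖) ≤ 4 * ‖a - b‖ := by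
  have hDa := one_add_conj_mul_ne_zero ha hξ
  have hDb := one_add_conj_mul_ne_zero hb hξ
  have hnum : (mobius a ξ - mobius b ξ) * ((1 + conj a * ξ) * (1 + conj b * ξ)) =
      (a - b) * (1 + conj b * ξ) - conj (a - b) * ξ * (ξ + b) := by
    rw [mobius, mobius, div_sub_div _ _ hDa hDb, div_mul_cancel₀ _ (mul_ne_zero hDa hDb), map_sub]
    ring
  have h1 : ‖1 + conj b * ξ‖ ≤ 2 := by
    calc ‖1 + conj b * ξ‖ ≤ 1 + ‖b‖ * ‖ξ‖ := by
          simpa only [norm_one, norm_mul, norm_conj] using norm_add_le (1 : ℂ) (conj b * ξ)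
      _ ≤ 2 := by nlinarith [norm_nonneg b, norm_nonneg ξ]
  have h2 : ‖ξ + b‖ ≤ 2 := by linarith [norm_add_le ξ b]
  rw [← norm_mul, ← norm_mul, hnum]
  calc ‖(a - b) * (1 + conj b * ξ) - conj (a - b) * ξ * (ξ + b)‖
      ≤ ‖a - b‖ * ‖1 + conj b * ξ‖ + ‖a - b‖ * ‖ξ‖ * ‖ξ + b‖ := by
        simpa only [norm_mul, norm_conj] using
          norm_sub_le ((a - b) * (1 + conj b * ξ)) (conj (a - b) * ξ * (ξ + b))
    _ ≤ ‖a - b‖ * 2 + ‖a - b‖ * 1 * 2 := by gcongr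
    _ = 4 * ‖a - b‖ := by ring

lemma le_norm_one_sub_conj_mobius_mul_mobius_mul (ha : ‖a‖ < 1) (hb : ‖b‖ < 1)
    (hξ : ‖ξ‖ < 1) :
    ‖1 - conj a * b‖ * (1 - ‖ξ‖ ^ 2) - 2 * ‖a - b‖ ≤
      ‖1 - conj (mobius a ξ) * mobius b ξ‖ * (‖1 + conj a * ξ‖ * ‖1 + conj b * ξ‖) := by
  have hDa : conj (1 + conj a * ξ) ≠ 0 := (map_ne_zero _).2 (one_add_conj_mul_ne_zero ha hξ)
  have hDb := one_add_conj_mul_ne_zero hb hξ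
  set w := 1 - conj a * b
  have hnum : (1 - conj (mobius a ξ) * mobius b ξ) * (conj (1 + conj a * ξ) * (1 + conj b * ξ)) =
      (w - conj w * (ξ * conj ξ)) + (conj (b - a) * ξ + (a - b) * conj ξ) := by
    rw [mobius, mobius, map_div₀, div_mul_div_comm, one_sub_div (mul_ne_zero hDa hDb),
      div_mul_cancel₀ _ (mul_ne_zero hDa hDb)]
    simp only [w, map_add, map_sub, map_mul, map_one, conj_conj]
    ring
  have hmain : ‖w‖ * (1 - ‖ξ‖ ^ 2) ≤ ‖w - conj w * (ξ * conj ξ)‖ := by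
    have h := norm_sub_norm_le w (conj w * (ξ * conj ξ))
    simp only [norm_mul, norm_conj] at h
    linarith
  have herr : ‖conj (b - a) * ξ + (a - b) * conj ξ‖ ≤ 2 * ‖a - b‖ := by
    calc ‖conj (b - a) * ξ + (a - b) * conj ξ‖ ≤ ‖a - b‖ * ‖ξ‖ + ‖a - b‖ * ‖ξ‖ := by
          simpa only [norm_mul, norm_conj, norm_sub_rev b a] using
            norm_add_le (conj (b - a) * ξ) ((a - b) * conj ξ)
      _ ≤ 2 * ‖a - b‖ := by nlinarith [norm_nonneg (a - b)]
  rw [← norm_conj (1 + conj a * ξ), ← norm_mul, ← norm_mul, hnum]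
  linarith [norm_sub_le_norm_add (w - conj w * (ξ * conj ξ)) (conj (b - a) * ξ + (a - b) * conj ξ)]

theorem pseudoDist_mobius_le {c : ℝ} (ha : ‖a‖ < 1) (hb : ‖b‖ < 1) (hξ : ‖ξ‖ < 1)
    (hc0 : 0 ≤ c) (hc1 : 2 * c < 1)
    (hab : ‖a - b‖ ≤ c * (1 - ‖ξ‖ ^ 2) * ‖1 - conj a * b‖) :
    pseudoDist (mobius a ξ) (mobius b ξ) ≤ 4 * c / (1 - 2 * c) := by
  have hnum := norm_mobius_sub_mobius_mul_le ha hb hξ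
  have hden := le_norm_one_sub_conj_mobius_mul_mobius_mul ha hb hξ
  set δ := ‖a - b‖
  set L := ‖1 - conj a * b‖
  set s := 1 - ‖ξ‖ ^ 2
  set D := ‖1 + conj a * ξ‖ * ‖1 + conj b * ξ‖
  set N := ‖mobius a ξ - mobius b ξ‖
  set M := ‖1 - conj (mobius a ξ) * mobius b ξ‖
  have hD : 0 < D := mul_pos (norm_pos_iff.2 (one_add_conj_mul_ne_zero ha hξ))
    (norm_pos_iff.2 (one_add_conj_mul_ne_zero hb hξ))
  have hLs : 0 < L * s := mul_pos (norm_one_sub_conj_mul_pos ha hb) (by nlinarith [norm_nonneg ξ])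
  have hM : 0 < M := by
    refine pos_of_mul_pos_left ?_ hD.le
    nlinarith
  rw [pseudoDist, div_le_div_iff₀ hM (by linarith)]
  refine le_of_mul_le_mul_right ?_ hD
  calc N * (1 - 2 * c) * D = N * D * (1 - 2 * c) := by ring
    _ ≤ 4 * δ * (1 - 2 * c) := by gcongr
    _ ≤ 4 * c * (L * s - 2 * δ) := by nlinarith
    _ ≤ 4 * c * M * D := by rw [mul_assoc _ M]; gcongr

end UnitDisc

theorem close_points_close_automorphisms_general (ε : ℝ) (hε0 : 0 < ε) :
    ∃ A : ℝ, 1 ≤ A ∧ ∀ (R : ℝ), 0 < R → ∀ a b : ℂ,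
    ‖a‖ < 1 → ‖b‖ < 1 →
    distP a b ≤ A⁻¹ * Real.exp (-R) →
    ∃ τa τb : ℂ → ℂ, IsDiscAut τa ∧ IsDiscAut τb ∧ τa 0 = a ∧ τb 0 = b ∧
      ∀ ξ ∈ hyperDisc R, distP (τa ξ) (τb ξ) ≤ ε := by
  have ht0 := Real.tanh_pos hε0
  have ht1 := Real.tanh_lt_one ε
  refine ⟨16 / Real.tanh ε, by rw [le_div_iff₀ ht0]; linarith,
    fun R hR a b ha hb hab => ⟨mobius a, mobius b, isDiscAut_mobius ha, isDiscAut_mobius hb,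
      mobius_zero a, mobius_zero b, fun ξ hξ => ?_⟩⟩
  have hξ1 : ‖ξ‖ < 1 := hξ.trans (Real.tanh_lt_one _)
  have hρ : pseudoDist a b ≤ Real.tanh ε / 8 * Real.exp (-R) := by
    rw [distP_eq_arTanh_pseudoDist, inv_div] at hab
    linarith [half_le_arTanh (pseudoDist_nonneg a b) (pseudoDist_lt_one ha hb)]
  have hδ : ‖a - b‖ ≤ Real.tanh ε / 8 * (1 - ‖ξ‖ ^ 2) * ‖1 - conj a * b‖ := by
    rw [pseudoDist, div_le_iff₀ (norm_one_sub_conj_mul_pos ha hb)] at hρ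
    refine hρ.trans ?_
    gcongr
    exact exp_neg_le_one_sub_norm_sq_of_mem_hyperDisc hR.le hξ
  rw [distP_eq_arTanh_pseudoDist]
  refine arTanh_le_of_le_tanh (by linarith [pseudoDist_nonneg (mobius a ξ) (mobius b ξ)]) ?_
  calc pseudoDist (mobius a ξ) (mobius b ξ)
      ≤ 4 * (Real.tanh ε / 8) / (1 - 2 * (Real.tanh ε / 8)) :=
        pseudoDist_mobius_le ha hb hξ1 (by positivity) (by linarith) hδ
    _ ≤ Real.tanh ε := by rw [div_le_iff₀ (by linarith)]; nlinarith

/-- for fixed `0 < ε < 1` there is `A ≥ 1` such that whenever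
`dist_P(a,b) ≤ A⁻¹ e^{-R}`, there are automorphisms `τ_a, τ_b` of `D` with
`τ_a(0) = a`, `τ_b(0) = b` and `dist_P(τ_a(ξ), τ_b(ξ)) ≤ ε` for all `ξ ∈ D_R`. -/
theorem close_points_close_automorphisms (ε : ℝ) (hε0 : 0 < ε) (hε1 : ε < 1) :
    ∃ A : ℝ, 1 ≤ A ∧ ∀ (R : ℝ), 0 < R → ∀ a b : ℂ,
    ‖a‖ < 1 → ‖b‖ < 1 →
    distP a b ≤ A⁻¹ * Real.exp (-R) →
    ∃ τa τb : ℂ → ℂ, IsDiscAut τa ∧ IsDiscAut τb ∧ τa 0 = a ∧ τb 0 = b ∧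
      ∀ ξ ∈ hyperDisc R, distP (τa ξ) (τb ξ) ≤ ε :=
  close_points_close_automorphisms_general ε hε0
end

section
/- For the Möbius map τ(z) = (z+a)/(1+az) with 0 < a < 1 real, and for |z| ≤ r with a ≪ 1−r, the Poincaré distance satisfies dist_P(z, τ(z)) = tanh^{−1}( |τ(z)−z| / |1 − z̄·τ(z)| ), and this quantity is bounded above by a constant times tanh^{−1}( a·|1−z²| / (1−|z|) ). -/
/-!
Writing `τ z - z = a (1 - z²) / (1 + a z)` and
`1 - z̄ τ z = (1 - |z|² + a (z - z̄)) / (1 + a z)`, the factor `1 + a z` cancels in the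
quotient defining `dist_P(z, τ z)`. For real `a` the term `a (z - z̄)` is purely imaginary,
so the remaining denominator has modulus at least `1 - |z|² ≥ 1 - |z|`. Hence the argument of
`tanh⁻¹` is at most `a |1 - z²| / (1 - |z|) ≤ 2a / (1 - |z|)`, which stays below `1` when
`a ≤ (1 - r) / 4`, and `tanh⁻¹` is increasing on `(-1, 1)`.
-/

open Set Complex

open ComplexConjugate

lemma arTanh_le_arTanh {x y : ℝ} (hx : -1 < x) (hxy : x ≤ y) (hy : y < 1) :
    arTanh x ≤ arTanh y := by
  have hquot : (1 + x) / (1 - x) ≤ (1 + y) / (1 - y) := by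
    rw [div_le_div_iff₀ (by linarith) (by linarith)]
    nlinarith
  unfold arTanh
  gcongr
  exact div_pos (by linarith) (by linarith)

lemma distP_eq_arTanh (w₁ w₂ : ℂ) :
    distP w₁ w₂ = arTanh (‖w₂ - w₁‖ / ‖1 - conj w₁ * w₂‖) := by
  rw [distP, norm_sub_rev]

lemma one_add_ne_zero_of_norm_lt_one {w : ℂ} (hw : ‖w‖ < 1) : 1 + w ≠ 0 := by
  intro h
  rw [← neg_eq_of_add_eq_zero_right h, norm_neg, norm_one] at hw
  exact lt_irrefl 1 hw

lemma mobius_sub_self {a z : ℂ} (h : 1 + a * z ≠ 0) :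
    (z + a) / (1 + a * z) - z = a * (1 - z ^ 2) / (1 + a * z) := by
  rw [eq_div_iff h, sub_mul, div_mul_cancel₀ _ h]
  ring

lemma one_sub_conj_mul_mobius {a : ℝ} {z : ℂ} (h : 1 + (a : ℂ) * z ≠ 0) :
    1 - conj z * ((z + a) / (1 + a * z)) =
      (1 - conj z * z + a * (z - conj z)) / (1 + a * z) := by
  rw [eq_div_iff h, sub_mul, mul_assoc, div_mul_cancel₀ _ h]
  ring

lemma re_one_sub_conj_mul_self_add_real_mul (a : ℝ) (z : ℂ) :
    (1 - conj z * z + a * (z - conj z)).re = 1 - ‖z‖ ^ 2 := by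
  simp [Complex.sq_norm, Complex.normSq_apply]

lemma one_sub_norm_le_norm_one_sub_conj_mul_self_add_real_mul (a : ℝ) {z : ℂ} (hz : ‖z‖ ≤ 1) :
    1 - ‖z‖ ≤ ‖1 - conj z * z + a * (z - conj z)‖ :=
  calc 1 - ‖z‖ ≤ 1 - ‖z‖ ^ 2 := by nlinarith [norm_nonneg z]
    _ = (1 - conj z * z + a * (z - conj z)).re := (re_one_sub_conj_mul_self_add_real_mul a z).symm
    _ ≤ _ := re_le_norm _

lemma norm_one_sub_sq_le_two {z : ℂ} (hz : ‖z‖ ≤ 1) : ‖1 - z ^ 2‖ ≤ 2 :=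
  calc ‖1 - z ^ 2‖ ≤ ‖(1 : ℂ)‖ + ‖z ^ 2‖ := norm_sub_le _ _
    _ = 1 + ‖z‖ ^ 2 := by rw [norm_one, norm_pow]
    _ ≤ 2 := by nlinarith [norm_nonneg z]

lemma mobius_displacement_ratio_le {a : ℝ} (ha : 0 ≤ a) (ha1 : a < 1) {z : ℂ} (hz : ‖z‖ < 1) :
    ‖(z + a) / (1 + a * z) - z‖ / ‖1 - conj z * ((z + a) / (1 + a * z))‖ ≤
      a * ‖1 - z ^ 2‖ / (1 - ‖z‖) := by
  have hden : 1 + (a : ℂ) * z ≠ 0 := by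
    apply one_add_ne_zero_of_norm_lt_one
    rw [norm_mul, norm_real, Real.norm_of_nonneg ha]
    nlinarith [norm_nonneg z]
  rw [mobius_sub_self hden, one_sub_conj_mul_mobius hden, norm_div, norm_div,
    div_div_div_cancel_right₀ (norm_ne_zero_iff.mpr hden), norm_mul, norm_real,
    Real.norm_of_nonneg ha]
  exact div_le_div_of_nonneg_left (by positivity) (by linarith)
    (one_sub_norm_le_norm_one_sub_conj_mul_self_add_real_mul a hz.le)

/-- for the Möbius map `τ(z) = (z+a)/(1+az)` with `0 < a < 1` real
and `|z| ≤ r` with `a ≤ c₀ (1-r)` (i.e. `a ≪ 1-r`), one has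
`dist_P(z,τ(z)) = tanh⁻¹(|τ(z)-z|/|1 - z̄ τ(z)|)` and this quantity is at most a
constant times `tanh⁻¹( a |1-z²| / (1-|z|) )`. -/
theorem mobius_displacement_bound : ∃ c₀ C : ℝ, 0 < c₀ ∧ 0 < C ∧
    ∀ (a r : ℝ) (z : ℂ), 0 < a → a < 1 → 0 < r → r < 1 →
    a ≤ c₀ * (1 - r) → ‖z‖ ≤ r →
    distP z ((z + (a : ℂ)) / (1 + (a : ℂ) * z)) =
        arTanh (‖(z + (a : ℂ)) / (1 + (a : ℂ) * z) - z‖ /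
          ‖1 - (starRingEnd ℂ) z * ((z + (a : ℂ)) / (1 + (a : ℂ) * z))‖) ∧
      distP z ((z + (a : ℂ)) / (1 + (a : ℂ) * z)) ≤
        C * arTanh (a * ‖1 - z ^ 2‖ / (1 - ‖z‖)) := by
  refine ⟨1 / 4, 1, by norm_num, one_pos, fun a r z ha ha1 _ hr1 har hzr => ?_⟩
  refine ⟨distP_eq_arTanh _ _, ?_⟩
  have hz : ‖z‖ < 1 := hzr.trans_lt hr1
  have hbound_lt_one : a * ‖1 - z ^ 2‖ / (1 - ‖z‖) < 1 := by
    rw [div_lt_one (by linarith)]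
    nlinarith [norm_one_sub_sq_le_two hz.le]
  rw [distP_eq_arTanh, one_mul]
  exact arTanh_le_arTanh (neg_one_lt_zero.trans_le (by positivity))
    (mobius_displacement_ratio_le ha.le ha1 hz) hbound_lt_one
end

section
/- Consider entropy defined via a family of distances dist_t; if X is compact with finite box dimension bound (X coverable by A·ε^{−m} balls of radius ε for all small ε) and points x,y are (t,ε)-separated only if dist_X(x,y) > 2e^{−ct−d}ε for t large, then M(X,t,ε) ≤ A·4^m·e^{mct+md}·ε^{−m}. -/
open Set Filter ENNReal

/-- if `X` is coverable by `A ε^{-m}` balls of radius `ε` (base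
distance `dX`) for all small `ε`, and if for `t` large two `(t,ε)`-separated
points satisfy `dX(x,y) > 2 e^{-ct-d₀} ε`, then
`M(X,t,ε) ≤ A 4^m e^{mct+md₀} ε^{-m}`. -/
theorem sepNum_le_of_polynomial_cover {X : Type*} (d : ℝ → X → X → ℝ)
    (dX : X → X → ℝ)
    (hsymm : ∀ x y, dX x y = dX y x)
    (htri : ∀ x y z, dX x z ≤ dX x y + dX y z)
    (A m c d₀ ε₀ T : ℝ) (hA : 0 < A) (hm : 0 < m) (hc : 0 ≤ c) (hd₀ : 0 ≤ d₀)
    (hε₀ : 0 < ε₀)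
    (hcov : ∀ ε : ℝ, 0 < ε → ε < ε₀ →
      ((coverNum dX univ ε : ℕ∞) : ℝ≥0∞) ≤ ENNReal.ofReal (A * ε ^ (-m)))
    (ε : ℝ) (hε : 0 < ε)
    (hsep : ∀ t, T ≤ t → ∀ x y : X, ε < d t x y →
      2 * Real.exp (-(c * t) - d₀) * ε < dX x y)
    (t : ℝ) (ht : T ≤ t) (hsmall : Real.exp (-(c * t) - d₀) * ε < ε₀) :
    ((sepNum (d t) univ ε : ℕ∞) : ℝ≥0∞) ≤
      ENNReal.ofReal (A * 4 ^ m * Real.exp (m * c * t + m * d₀) * ε ^ (-m)) := by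
  set r := Real.exp (-(c * t) - d₀) * ε with hr
  have hrpos : 0 < r := mul_pos (Real.exp_pos _) hε
  have step1 : sepNum (d t) univ ε ≤ coverNum dX univ r := by
    unfold sepNum coverNum
    refine iSup_le fun F => iSup_le fun hF => le_iInf fun G => le_iInf fun hG => ?_
    norm_cast
    have hmem : ∀ x : X, ∃ g ∈ G, x ∈ dBall dX g r := by
      intro x
      simpa using hG (mem_univ x)
    choose f hfG hfball using hmem
    apply Finset.card_le_card_of_injOn f (fun x _ => hfG x)
    intro x hx y hy hxy
    by_contra hne
    have hd : ε < d t x y := hF.2 hx hy hne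
    have h1 : dX (f x) x ≤ r := hfball x
    have h2 : dX (f y) y ≤ r := hfball y
    have h3 := hsep t ht x y hd
    have h4 : dX x y ≤ 2 * r := by
      calc dX x y ≤ dX x (f x) + dX (f x) y := htri _ _ _
        _ = dX (f x) x + dX (f x) y := by rw [hsymm]
        _ ≤ r + r := add_le_add h1 (by rw [hxy]; exact h2)
        _ = 2 * r := by ring
    have h5 : 2 * Real.exp (-(c * t) - d₀) * ε = 2 * r := by rw [hr]; ring
    linarith
  have step2 := hcov r hrpos hsmall
  have cast1 : ((sepNum (d t) univ ε : ℕ∞) : ℝ≥0∞) ≤ ((coverNum dX univ r : ℕ∞) : ℝ≥0∞) := by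
    exact_mod_cast step1
  refine cast1.trans (step2.trans (ENNReal.ofReal_le_ofReal ?_))
  have hE : Real.exp (-(c * t) - d₀) ^ (-m) = Real.exp (m * c * t + m * d₀) := by
    rw [Real.rpow_def_of_pos (Real.exp_pos _), Real.log_exp]
    congr 1; ring
  have hrm : r ^ (-m) = Real.exp (m * c * t + m * d₀) * ε ^ (-m) := by
    rw [hr, Real.mul_rpow (Real.exp_pos _).le hε.le, hE]
  rw [hrm]
  have h4m : (1 : ℝ) ≤ 4 ^ m := Real.one_le_rpow (by norm_num) hm.le
  have hεm : 0 ≤ ε ^ (-m) := Real.rpow_nonneg hε.le _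
  have hexp : 0 < Real.exp (m * c * t + m * d₀) := Real.exp_pos _
  nlinarith [mul_pos hA hexp, mul_nonneg (mul_pos hA hexp).le hεm]
end
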